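/- For α ≥ 1, x ≥ 0, and 0 < y < 1, Σ_{n=0}^∞ G_{α+n}(x) y^n = (1-y)^{-1}(G_{α-1}(x) - y^{1-α} e^{(y-1)x} G_{α-1}(xy)), where G_0 := 1. -/

import Mathlib

/-!
Integration by parts gives `G (s + 1) x = G s x - e^{-x} x^s / Γ(s + 1)`, and
`G (s + n) x ≤ x^(s + n) / Γ(s + n + 1) → 0`; telescoping therefore expands
`G s x = ∑ₖ e^{-x} x^(s + k) / Γ(s + k + 1)` and writes `G (α + n) x` as `G (α - 1) x` minus
the partial sum `∑_{k ≤ n} cₖ` of that series for `s = α - 1`. Multiplying by `yⁿ` and summing,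
the Cauchy product with the geometric series turns `∑ₙ (∑_{k ≤ n} cₖ) yⁿ` into
`(1 - y)⁻¹ ∑ₖ cₖ yᵏ`, and `∑ₖ cₖ yᵏ` is the same expansion of `G (α - 1)` at `x y`,
rescaled by `y^(1 - α) e^{(y - 1) x}`.
-/

noncomputable def G (β x : ℝ) : ℝ :=
  if β = 0 then 1 else (1 / Real.Gamma β) * ∫ t in (0:ℝ)..x, Real.exp (-t) * t ^ (β - 1)

open Real Filter Topology Finset intervalIntegral

lemma ofReal_intervalIntegral_eq_partialGamma (s : ℝ) {X : ℝ} (hX : 0 ≤ X) :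
    ((∫ t in (0 : ℝ)..X, exp (-t) * t ^ (s - 1) : ℝ) : ℂ) = Complex.partialGamma s X := by
  rw [Complex.partialGamma, ← integral_ofReal]
  refine integral_congr fun t ht => ?_
  rw [Set.uIcc_of_le hX] at ht
  push_cast
  rw [Complex.ofReal_cpow ht.1]
  push_cast
  rfl

lemma integral_exp_neg_mul_rpow_add_one {s X : ℝ} (hs : 0 < s) (hX : 0 ≤ X) :
    ∫ t in (0 : ℝ)..X, exp (-t) * t ^ (s + 1 - 1) =
      s * (∫ t in (0 : ℝ)..X, exp (-t) * t ^ (s - 1)) - exp (-X) * X ^ s := by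
  apply Complex.ofReal_injective
  have h := Complex.partialGamma_add_one (s := s) (by simpa using hs) hX
  rw [← Complex.ofReal_one, ← Complex.ofReal_add, ← ofReal_intervalIntegral_eq_partialGamma _ hX,
    ← ofReal_intervalIntegral_eq_partialGamma _ hX] at h
  rw [h]
  push_cast
  rw [Complex.ofReal_cpow hX]

lemma G_of_ne_zero {β : ℝ} (hβ : β ≠ 0) (x : ℝ) :
    G β x = (Gamma β)⁻¹ * ∫ t in (0 : ℝ)..x, exp (-t) * t ^ (β - 1) := by
  simp [G, hβ]

lemma G_add_one {s x : ℝ} (hs : 0 ≤ s) (hx : 0 ≤ x) :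
    G (s + 1) x = G s x - exp (-x) * x ^ s / Gamma (s + 1) := by
  rcases hs.eq_or_lt with rfl | hs
  · simp [G, integral_comp_neg (fun t => exp t)]
  · rw [G_of_ne_zero (by positivity), G_of_ne_zero hs.ne', integral_exp_neg_mul_rpow_add_one hs hx,
      Gamma_add_one hs.ne']
    have := (Gamma_pos_of_pos hs).ne'
    field_simp

lemma G_sub_G_add_natCast {s x : ℝ} (hs : 0 ≤ s) (hx : 0 ≤ x) (n : ℕ) :
    G s x - G (s + n) x = ∑ k ∈ range n, exp (-x) * x ^ (s + k) / Gamma (s + k + 1) := by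
  induction n with
  | zero => simp
  | succ n ih =>
    rw [sum_range_succ, ← ih, Nat.cast_succ, ← add_assoc, G_add_one (by positivity) hx]
    ring

lemma G_nonneg {β x : ℝ} (hβ : 0 < β) (hx : 0 ≤ x) : 0 ≤ G β x := by
  rw [G_of_ne_zero hβ.ne']
  have := (Gamma_pos_of_pos hβ).le
  refine mul_nonneg (by positivity) (integral_nonneg hx fun t ht => ?_)
  have := ht.1
  positivity

lemma G_le_rpow_div_Gamma_add_one {β x : ℝ} (hβ : 0 < β) (hx : 0 ≤ x) :
    G β x ≤ x ^ β / Gamma (β + 1) := by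
  have hint : ∫ t in (0 : ℝ)..x, exp (-t) * t ^ (β - 1) ≤ ∫ t in (0 : ℝ)..x, t ^ (β - 1) := by
    refine integral_mono_on hx ?_ (intervalIntegrable_rpow' (by linarith)) fun t ht => ?_
    · exact (intervalIntegrable_rpow' (by linarith)).continuousOn_mul
        (continuous_exp.comp continuous_neg).continuousOn
    · have := rpow_nonneg ht.1 (β - 1)
      exact mul_le_of_le_one_left this (exp_le_one_iff.mpr (by linarith [ht.1]))
  rw [integral_rpow (Or.inl (by linarith)), sub_add_cancel, zero_rpow hβ.ne', sub_zero] at hint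
  rw [G_of_ne_zero hβ.ne', Gamma_add_one hβ.ne']
  have := Gamma_pos_of_pos hβ
  calc (Gamma β)⁻¹ * ∫ t in (0 : ℝ)..x, exp (-t) * t ^ (β - 1) ≤ (Gamma β)⁻¹ * (x ^ β / β) := by
        gcongr
    _ = x ^ β / (β * Gamma β) := by field_simp

lemma tendsto_G_add_natCast {s x : ℝ} (hs : 0 ≤ s) (hx : 0 ≤ x) :
    Tendsto (fun n : ℕ => G (s + n) x) atTop (𝓝 0) := by
  have hlim : Tendsto (fun n : ℕ => x ^ s * (x ^ n / n.factorial)) atTop (𝓝 0) := by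
    simpa using (FloorSemiring.tendsto_pow_div_factorial_atTop x).const_mul (x ^ s)
  refine tendsto_of_tendsto_of_tendsto_of_le_of_le' tendsto_const_nhds hlim ?_ ?_
  · filter_upwards [eventually_ge_atTop 1] with n hn
    exact G_nonneg (by positivity) hx
  · filter_upwards [eventually_ge_atTop 1] with n hn
    have hn' : (1 : ℝ) ≤ n := by exact_mod_cast hn
    have hΓ : (n.factorial : ℝ) ≤ Gamma (s + n + 1) := by
      rw [← Gamma_nat_eq_factorial]
      exact Gamma_strictMonoOn_Ici.monotoneOn (by simp; linarith) (by simp; linarith)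
        (by linarith)
    calc G (s + n) x ≤ x ^ (s + n) / Gamma (s + n + 1) :=
          G_le_rpow_div_Gamma_add_one (by positivity) hx
      _ ≤ x ^ (s + n) / n.factorial := by gcongr
      _ = x ^ s * (x ^ n / n.factorial) := by
        rw [rpow_add_natCast' hx (by positivity), mul_div_assoc]

lemma hasSum_G {s x : ℝ} (hs : 0 ≤ s) (hx : 0 ≤ x) :
    HasSum (fun k : ℕ => exp (-x) * x ^ (s + k) / Gamma (s + k + 1)) (G s x) := by
  have hterm (k : ℕ) : 0 ≤ exp (-x) * x ^ (s + k) / Gamma (s + k + 1) :=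
    div_nonneg (by positivity) (Gamma_pos_of_pos (by positivity)).le
  rw [hasSum_iff_tendsto_nat_of_nonneg hterm]
  simp_rw [← G_sub_G_add_natCast hs hx]
  simpa using (tendsto_G_add_natCast hs hx).const_sub (G s x)

lemma hasSum_sum_range_mul_geometric {c : ℕ → ℝ} {y D : ℝ}
    (hc : HasSum (fun k => c k * y ^ k) D) (hc0 : ∀ k, 0 ≤ c k) (hy0 : 0 ≤ y) (hy1 : y < 1) :
    HasSum (fun n => (∑ k ∈ range (n + 1), c k) * y ^ n) ((1 - y)⁻¹ * D) := by
  have hf : Summable fun k => ‖c k * y ^ k‖ := by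
    simpa only [norm_of_nonneg (mul_nonneg (hc0 _) (pow_nonneg hy0 _))] using hc.summable
  have hg : Summable fun k => ‖y ^ k‖ := by
    simpa only [norm_of_nonneg (pow_nonneg hy0 _)] using summable_geometric_of_lt_one hy0 hy1
  have h := hasSum_sum_range_mul_of_summable_norm hf hg
  rw [hc.tsum_eq, tsum_geometric_of_lt_one hy0 hy1, mul_comm] at h
  refine h.congr_fun fun n => ?_
  rw [sum_mul]
  refine sum_congr rfl fun k hk => ?_
  rw [mul_assoc, ← pow_add, Nat.add_sub_cancel' (Nat.lt_succ_iff.mp (mem_range.mp hk))]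

theorem stmt_4 (α x y : ℝ) (hα : 1 ≤ α) (hx : 0 ≤ x) (hy0 : 0 < y) (hy1 : y < 1) :
    HasSum (fun n : ℕ => G (α + n) x * y ^ n)
      ((1 - y)⁻¹ * (G (α - 1) x - y ^ (1 - α) * Real.exp ((y - 1) * x) * G (α - 1) (x * y))) := by
  have hs : 0 ≤ α - 1 := by linarith
  set c : ℕ → ℝ := fun k => exp (-x) * x ^ (α - 1 + k) / Gamma (α - 1 + k + 1)
  have hG : ∀ n : ℕ, G (α + n) x = G (α - 1) x - ∑ k ∈ range (n + 1), c k := by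
    intro n
    rw [← G_sub_G_add_natCast hs hx, Nat.cast_succ, show α - 1 + (n + 1) = α + n by ring]
    ring
  have hc : HasSum (fun k => c k * y ^ k)
      (y ^ (1 - α) * exp ((y - 1) * x) * G (α - 1) (x * y)) := by
    refine ((hasSum_G hs (mul_nonneg hx hy0.le)).mul_left _).congr_fun fun k => ?_
    have hy : y ^ (1 - α) * y ^ (α - 1 + k) = y ^ k := by
      rw [← rpow_add hy0, show 1 - α + (α - 1 + k) = k by ring, rpow_natCast]
    have he : exp ((y - 1) * x) * exp (-(x * y)) = exp (-x) := by
      rw [← exp_add]; ring_nf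
    simp only [c]
    rw [mul_rpow hx hy0.le, ← hy, ← he]
    ring
  have hc0 : ∀ k, 0 ≤ c k := fun k =>
    div_nonneg (by positivity) (Gamma_pos_of_pos (by positivity)).le
  have h := ((hasSum_geometric_of_lt_one hy0.le hy1).mul_left (G (α - 1) x)).sub
    (hasSum_sum_range_mul_geometric hc hc0 hy0.le hy1)
  rw [mul_sub, mul_comm]
  refine h.congr_fun fun n => ?_
  rw [hG]
  ring
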